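/- arXiv:2205.08717 — 4 statements merged into one kernel-verified Lean document; each statement's English description precedes it below -/
import Mathlib

section
/- For fixed y and ŷ with y ≤ ŷ, the map ε ↦ ℓ_ε(y, ŷ) is non-increasing in ε on (0, 1]; similarly for y > ŷ. Hence for 0 < ε₁ ≤ ε₂ ≤ 1, ℓ_{ε₂}(y, ŷ) ≤ ℓ_{ε₁}(y, ŷ) for all y, ŷ. -/
noncomputable def compLoss (ε y yh : ℝ) : ℝ :=
  if y ≤ yh - Real.log (5 / ε) then 5 / ε - 1
  else if y ≤ yh then Real.exp (yh - y) - 1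
  else if y ≤ yh + Real.log (1 + ε / 5) then (1 / ε) * (y - yh)
  else 1

theorem stmt_3 (ε₁ ε₂ : ℝ) (h1 : 0 < ε₁) (h12 : ε₁ ≤ ε₂) (h2 : ε₂ ≤ 1) (y yh : ℝ) :
    compLoss ε₂ y yh ≤ compLoss ε₁ y yh := by
  have hε2 : 0 < ε₂ := lt_of_lt_of_le h1 h12
  have hdiv : 5 / ε₂ ≤ 5 / ε₁ := div_le_div_of_nonneg_left (by norm_num) h1 h12
  have hlog12 : Real.log (5 / ε₂) ≤ Real.log (5 / ε₁) :=
    Real.log_le_log (by positivity) hdiv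
  have hlogpos : 0 < Real.log (5 / ε₂) :=
    Real.log_pos (by rw [lt_div_iff₀ hε2]; linarith)
  have hlogpos1 : 0 < Real.log (5 / ε₁) := lt_of_lt_of_le hlogpos hlog12
  have hlogmon : Real.log (1 + ε₁ / 5) ≤ Real.log (1 + ε₂ / 5) :=
    Real.log_le_log (by linarith) (by linarith)
  have hlogle : Real.log (1 + ε₂ / 5) ≤ ε₂ / 5 := by
    have := Real.log_le_sub_one_of_pos (x := 1 + ε₂ / 5) (by linarith)
    linarith
  have hexp1 : yh - y ≤ Real.log (5 / ε₁) → Real.exp (yh - y) ≤ 5 / ε₁ := by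
    intro hx
    calc Real.exp (yh - y) ≤ Real.exp (Real.log (5 / ε₁)) := Real.exp_le_exp.mpr hx
    _ = 5 / ε₁ := Real.exp_log (by positivity)
  have hexp2 : Real.log (5 / ε₂) ≤ yh - y → 5 / ε₂ ≤ Real.exp (yh - y) := by
    intro hx
    calc (5 : ℝ) / ε₂ = Real.exp (Real.log (5 / ε₂)) := (Real.exp_log (by positivity)).symm
    _ ≤ Real.exp (yh - y) := Real.exp_le_exp.mpr hx
  have hinv : 1 / ε₂ ≤ 1 / ε₁ := div_le_div_of_nonneg_left (by norm_num) h1 h12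
  have hε2' : 1 / ε₂ * ε₂ = 1 := by field_simp
  unfold compLoss
  split_ifs with a b c d e f g h i j k l m n <;>
    first
    | linarith
    | linarith [hexp1 (by linarith)]
    | linarith [hexp2 (by linarith)]
    | nlinarith [mul_le_mul_of_nonneg_right hinv (by linarith : (0:ℝ) ≤ y - yh)]
    | nlinarith [mul_le_mul_of_nonneg_left (by linarith : y - yh ≤ ε₂)
        (le_of_lt (by positivity : (0:ℝ) < 1 / ε₂)), hε2']
end

section
/- If ŷ ≤ y, then (1+ε)·e^{ŷ−y} ≤ 1 + ε + 3·ℓ_ε(ŷ, y) where the loss is evaluated with predicted value ŷ and true value y; and if ŷ − ln(5/ε) ≤ y ≤ ŷ, then (1+ε)·e^{ŷ−y} ≤ 1 + ε + 3·(e^{ŷ−y} − 1). -/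
theorem stmt_4 (ε y yh : ℝ) (hε : 0 < ε) (hε1 : ε ≤ 1) :
    (yh ≤ y → (1 + ε) * Real.exp (yh - y) ≤ 1 + ε + 3 * compLoss ε y yh) ∧
    (yh - Real.log (5 / ε) ≤ y → y ≤ yh →
      (1 + ε) * Real.exp (yh - y) ≤ 1 + ε + 3 * (Real.exp (yh - y) - 1)) := by
  have hlog : 0 < Real.log (5 / ε) := by
    apply Real.log_pos
    rw [lt_div_iff₀ hε]
    linarith
  have hexple : Real.exp (yh - y) ≤ 1 → (1 + ε) * Real.exp (yh - y) ≤ 1 + ε := by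
    intro h
    nlinarith [Real.exp_pos (yh - y)]
  constructor
  · intro hle
    unfold compLoss
    have hexp1 : Real.exp (yh - y) ≤ 1 := by
      rw [Real.exp_le_one_iff]; linarith
    have h1 : ¬ y ≤ yh - Real.log (5 / ε) := by linarith
    rw [if_neg h1]
    by_cases h2 : y ≤ yh
    · rw [if_pos h2]
      have : y = yh := le_antisymm h2 hle
      simp [this]
    · rw [if_neg h2]
      push_neg at h2
      by_cases h3 : y ≤ yh + Real.log (1 + ε / 5)
      · rw [if_pos h3]
        have : 0 ≤ (1 / ε) * (y - yh) := by apply mul_nonneg (by positivity); linarith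
        linarith [hexple hexp1]
      · rw [if_neg h3]
        linarith [hexple hexp1]
  · intro _ h2
    have ht : 1 ≤ Real.exp (yh - y) := by
      rw [Real.one_le_exp_iff]; linarith
    nlinarith
end

section
/- For any mixed strategy placing probability q₁ on strategy (i) and 1−q₁ on strategy (ii), with p = X ∈ {1/3 − ε, 1/3 + ε}: if X = 1/3 + ε and q₁ ≤ 1/2 then the expected competitive ratio q₁·(3/2 − X/2) + (1−q₁)·(X+1) is strictly greater than 4/3 − ε/4 (for 0 < ε ≤ 1/3); and if X = 1/3 − ε and q₁ ≥ 1/2 then the expected ratio is at least 4/3 − ε/4. -/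
theorem stmt_6 (q₁ ε X : ℝ) (hq0 : 0 ≤ q₁) (hq1 : q₁ ≤ 1)
    (hε0 : 0 < ε) (hε1 : ε ≤ 1 / 3) :
    (X = 1 / 3 + ε → q₁ ≤ 1 / 2 →
      4 / 3 - ε / 4 < q₁ * (3 / 2 - X / 2) + (1 - q₁) * (X + 1)) ∧
    (X = 1 / 3 - ε → 1 / 2 ≤ q₁ →
      4 / 3 - ε / 4 ≤ q₁ * (3 / 2 - X / 2) + (1 - q₁) * (X + 1)) := by
  constructor
  · intro hX hq
    subst hX
    nlinarith [mul_nonneg hq0 hε0.le]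
  · intro hX hq
    subst hX
    nlinarith [mul_nonneg (sub_nonneg.2 hq) hε0.le]
end

section
/- Let a, b ≥ 0, η > 0, α > 0, and suppose |a − b| ≤ η·√a. Then a ≤ (1+α)·b + (1 + 1/α)·η², and b ≤ ((2α+1)/(1+α))·a + (1 + 1/α)·η². -/
/-- Below the threshold `√a ≤ κ η` one has `η √a ≤ κ η²`; above it, `κ η √a ≤ √a · √a = a`. -/
theorem Real.mul_sqrt_le_max_sq_div {a η κ : ℝ} (ha : 0 ≤ a) (hκ : 0 < κ) :
    η * √a ≤ max (κ * η ^ 2) (a / κ) := by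
  have hsq : √a * √a = a := Real.mul_self_sqrt ha
  by_cases hle : √a ≤ κ * η
  · have hη : 0 ≤ η := nonneg_of_mul_nonneg_right ((Real.sqrt_nonneg a).trans hle) hκ
    refine le_max_of_le_left ?_
    calc η * √a ≤ η * (κ * η) := mul_le_mul_of_nonneg_left hle hη
      _ = κ * η ^ 2 := by ring
  · refine le_max_of_le_right ((le_div_iff₀ hκ).mpr ?_)
    nlinarith [mul_nonneg (Real.sqrt_nonneg a) (sub_nonneg.mpr (not_le.mp hle).le)]

theorem stmt_9_general (a b η α : ℝ) (ha : 0 ≤ a) (hb : 0 ≤ b) (hα : 0 < α)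
    (h : |a - b| ≤ η * Real.sqrt a) :
    a ≤ (1 + α) * b + (1 + 1 / α) * η ^ 2 ∧
    b ≤ ((2 * α + 1) / (1 + α)) * a + (1 + 1 / α) * η ^ 2 := by
  have hα1 : 0 < 1 + α := by linarith
  obtain ⟨hba, hab⟩ := abs_le.mp h
  have hratio : a / (1 + 1 / α) = a - a / (1 + α) := by field_simp; ring
  have hsplit : (2 * α + 1) / (1 + α) * a = a + (a - a / (1 + α)) := by field_simp; ring
  have hshrink : a / (1 + α) ≤ a := div_le_self ha (by linarith)
  have hη2 : 0 ≤ (1 + 1 / α) * η ^ 2 := by positivity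
  rw [hsplit]
  rcases le_max_iff.mp (Real.mul_sqrt_le_max_sq_div (η := η) ha (by positivity : 0 < 1 + 1 / α))
    with hsmall | hlarge
  · exact ⟨by linarith [mul_nonneg hα.le hb], by linarith⟩
  · rw [hratio] at hlarge
    have ha_le : a ≤ (1 + α) * b := by
      rw [← div_le_iff₀' hα1]; linarith
    exact ⟨by linarith, by linarith⟩

theorem stmt_9 (a b η α : ℝ) (ha : 0 ≤ a) (hb : 0 ≤ b) (hη : 0 < η) (hα : 0 < α)
    (h : |a - b| ≤ η * Real.sqrt a) :
    a ≤ (1 + α) * b + (1 + 1 / α) * η ^ 2 ∧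
    b ≤ ((2 * α + 1) / (1 + α)) * a + (1 + 1 / α) * η ^ 2 :=
  stmt_9_general a b η α ha hb hα h
end
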